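/- arXiv:2104.13505 — 7 statements merged into one kernel-verified Lean document; each statement's English description precedes it below -/
import Mathlib

section
/- For all positive integers k and N with k ≤ N, f(k,N) ≤ 2k(⌊N/k⌋ − 1) + 1. -/
open Finset

/-- The elements of `S` on the `A` side (left side). -/
def sideA {N : ℕ} (S : Finset (Fin N ⊕ Fin N)) : Finset (Fin N ⊕ Fin N) :=
  S.filter (fun x => x.isLeft)

/-- The elements of `S` on the `B` side (right side). -/
def sideB {N : ℕ} (S : Finset (Fin N ⊕ Fin N)) : Finset (Fin N ⊕ Fin N) :=
  S.filter (fun x => x.isRight)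

/-- A family of subsets of `A ∪ B` is semiintersecting if every member meets each side in
exactly `k` elements, and any two distinct members are disjoint in exactly one of the sides. -/
def Semiintersecting (k N : ℕ) (F : Finset (Finset (Fin N ⊕ Fin N))) : Prop :=
  (∀ S ∈ F, (sideA S).card = k ∧ (sideB S).card = k) ∧
  (∀ S ∈ F, ∀ T ∈ F, S ≠ T →
      ((sideA S ∩ sideA T = ∅) ↔ (sideB S ∩ sideB T ≠ ∅)))

/-- `f k N`: the maximum cardinality of a semiintersecting family with parameters `k`, `N`. -/
noncomputable def semiMax (k N : ℕ) : ℕ :=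
  sSup {n | ∃ F : Finset (Finset (Fin N ⊕ Fin N)), Semiintersecting k N F ∧ F.card = n}

/-!
Fix a member `S₀` of a semiintersecting family `F`. Any two distinct members share a point on
exactly one side, so `F` is intersecting and every other member meets one of the `2k` points of
`S₀`. The members through a point of `A` share a point of `A`, hence are pairwise disjoint on `B`;
each of them has `k` points there, so there are at most `⌊N/k⌋` of them, and symmetrically for a
point of `B`. Thus at most `2k (⌊N/k⌋ - 1)` members besides `S₀`.
-/

theorem Finset.card_mul_le_of_pairwiseDisjoint {ι α : Type*} [DecidableEq α] {G : Finset ι}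
    {t : ι → Finset α} {U : Finset α} {k : ℕ} (hdisj : (G : Set ι).PairwiseDisjoint t)
    (hcard : ∀ i ∈ G, #(t i) = k) (hU : ∀ i ∈ G, t i ⊆ U) : #G * k ≤ #U :=
  calc #G * k = ∑ i ∈ G, #(t i) := (sum_const_nat hcard).symm
    _ = #(G.biUnion t) := (card_biUnion hdisj).symm
    _ ≤ #U := card_le_card (biUnion_subset.mpr hU)

theorem Set.Intersecting.card_le_of_degree_le {α : Type*} [DecidableEq α]
    {F : Finset (Finset α)} (hF : (F : Set (Finset α)).Intersecting) {d : ℕ}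
    (hd : ∀ x, #{S ∈ F | x ∈ S} ≤ d) {S₀ : Finset α} (hS₀ : S₀ ∈ F) :
    #F ≤ #S₀ * (d - 1) + 1 := by
  have hcover : F.erase S₀ ⊆ S₀.biUnion fun x => {T ∈ F.erase S₀ | x ∈ T} := by
    intro T hT
    obtain ⟨x, hxS₀, hxT⟩ := Finset.not_disjoint_iff.mp (hF hS₀ (mem_of_mem_erase hT))
    exact Finset.mem_biUnion.mpr ⟨x, hxS₀, mem_filter.mpr ⟨hT, hxT⟩⟩
  have hdeg : ∀ x ∈ S₀, #{T ∈ F.erase S₀ | x ∈ T} ≤ d - 1 := fun x hx => by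
    rw [filter_erase, card_erase_of_mem (mem_filter.mpr ⟨hS₀, hx⟩)]
    exact Nat.sub_le_sub_right (hd x) 1
  calc #F = #(F.erase S₀) + 1 := (card_erase_add_one hS₀).symm
    _ ≤ ∑ x ∈ S₀, #{T ∈ F.erase S₀ | x ∈ T} + 1 := by
      gcongr
      exact (Finset.card_le_card hcover).trans Finset.card_biUnion_le
    _ ≤ ∑ _x ∈ S₀, (d - 1) + 1 := by gcongr with x hx; exact hdeg x hx
    _ = #S₀ * (d - 1) + 1 := by rw [sum_const, smul_eq_mul]

section Sides

variable {N : ℕ}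

theorem card_sideA_add_card_sideB (S : Finset (Fin N ⊕ Fin N)) :
    #(sideA S) + #(sideB S) = #S := by
  rw [sideA, sideB, ← card_filter_add_card_filter_not (s := S) (fun x => x.isLeft)]
  simp

theorem card_sideA_univ : #(sideA (univ : Finset (Fin N ⊕ Fin N))) = N := by
  rw [sideA, show univ.filter (fun x : Fin N ⊕ Fin N => x.isLeft) = univ.map .inl by
    ext x; cases x <;> simp]
  simp

theorem card_sideB_univ : #(sideB (univ : Finset (Fin N ⊕ Fin N))) = N := by
  rw [sideB, show univ.filter (fun x : Fin N ⊕ Fin N => x.isRight) = univ.map .inr by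
    ext x; cases x <;> simp]
  simp

theorem sideA_subset_sideA_univ (S : Finset (Fin N ⊕ Fin N)) : sideA S ⊆ sideA univ :=
  filter_subset_filter _ (subset_univ S)

theorem sideB_subset_sideB_univ (S : Finset (Fin N ⊕ Fin N)) : sideB S ⊆ sideB univ :=
  filter_subset_filter _ (subset_univ S)

end Sides

namespace Semiintersecting

variable {k N : ℕ} {F : Finset (Finset (Fin N ⊕ Fin N))} {S T : Finset (Fin N ⊕ Fin N)}

theorem disjoint_sideA_iff (hF : Semiintersecting k N F) (hS : S ∈ F) (hT : T ∈ F)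
    (hne : S ≠ T) : Disjoint (sideA S) (sideA T) ↔ ¬Disjoint (sideB S) (sideB T) := by
  simpa only [disjoint_iff_inter_eq_empty] using hF.2 S hS T hT hne

theorem intersecting (hk : 0 < k) (hF : Semiintersecting k N F) :
    (F : Set (Finset (Fin N ⊕ Fin N))).Intersecting := by
  intro S hS T hT hST
  have hA : Disjoint (sideA S) (sideA T) := hST.mono (filter_subset _ S) (filter_subset _ T)
  have hB : Disjoint (sideB S) (sideB T) := hST.mono (filter_subset _ S) (filter_subset _ T)
  rcases eq_or_ne S T with rfl | hne
  · have hcard := (hF.1 S hS).1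
    rw [disjoint_self.mp hA, bot_eq_empty, card_empty] at hcard
    omega
  · exact (hF.disjoint_sideA_iff hS hT hne).mp hA hB

theorem card_filter_mem_mul_le (hF : Semiintersecting k N F) (x : Fin N ⊕ Fin N) :
    #{S ∈ F | x ∈ S} * k ≤ N := by
  cases x with
  | inl a =>
    refine (card_mul_le_of_pairwiseDisjoint (t := sideB) ?_
      (fun S hS => (hF.1 S (mem_filter.mp hS).1).2)
      (fun S _ => sideB_subset_sideB_univ S)).trans_eq card_sideB_univ
    intro S hS T hT hne
    obtain ⟨hSF, haS⟩ := mem_filter.mp hS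
    obtain ⟨hTF, haT⟩ := mem_filter.mp hT
    have hA : ¬Disjoint (sideA S) (sideA T) :=
      not_disjoint_iff.mpr ⟨.inl a, by simp [sideA, haS], by simp [sideA, haT]⟩
    by_contra hB
    exact hA ((hF.disjoint_sideA_iff hSF hTF hne).mpr hB)
  | inr b =>
    refine (card_mul_le_of_pairwiseDisjoint (t := sideA) ?_
      (fun S hS => (hF.1 S (mem_filter.mp hS).1).1)
      (fun S _ => sideA_subset_sideA_univ S)).trans_eq card_sideA_univ
    intro S hS T hT hne
    obtain ⟨hSF, hbS⟩ := mem_filter.mp hS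
    obtain ⟨hTF, hbT⟩ := mem_filter.mp hT
    have hB : ¬Disjoint (sideB S) (sideB T) :=
      not_disjoint_iff.mpr ⟨.inr b, by simp [sideB, hbS], by simp [sideB, hbT]⟩
    exact (hF.disjoint_sideA_iff hSF hTF hne).mpr hB

theorem card_filter_mem_le (hk : 0 < k) (hF : Semiintersecting k N F) (x : Fin N ⊕ Fin N) :
    #{S ∈ F | x ∈ S} ≤ N / k :=
  (Nat.le_div_iff_mul_le hk).mpr (hF.card_filter_mem_mul_le x)

theorem card_le (hk : 0 < k) (hF : Semiintersecting k N F) :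
    #F ≤ 2 * k * (N / k - 1) + 1 := by
  obtain rfl | ⟨S₀, hS₀⟩ := F.eq_empty_or_nonempty
  · simp
  calc #F ≤ #S₀ * (N / k - 1) + 1 :=
        (hF.intersecting hk).card_le_of_degree_le (hF.card_filter_mem_le hk) hS₀
    _ = 2 * k * (N / k - 1) + 1 := by
      rw [← card_sideA_add_card_sideB, (hF.1 S₀ hS₀).1, (hF.1 S₀ hS₀).2, two_mul]

end Semiintersecting

theorem semiMax_le_general (k N : ℕ) (hk : 0 < k) :
    semiMax k N ≤ 2 * k * (N / k - 1) + 1 := by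
  refine csSup_le ⟨0, ∅, ?_, card_empty⟩ ?_
  · simp [Semiintersecting]
  · rintro n ⟨F, hF, rfl⟩
    exact hF.card_le hk

theorem semiMax_le (k N : ℕ) (hk : 0 < k) (hkN : k ≤ N) :
    semiMax k N ≤ 2 * k * (N / k - 1) + 1 :=
  semiMax_le_general k N hk
end

section
/- For all positive integers k and N with k ≤ N, f(k,N) ≤ ⌊N⌊N/k⌋/k⌋. -/
open Finset

/-!
Double count the incidences between members of the family and points of `B`. Each member has `k`
points in `B`. The members through a fixed point of `B` meet there, so their `A`-sides are pairwise
disjoint `k`-subsets of `A`; hence there are at most `N / k` of them, and `|F| k ≤ N ⌊N / k⌋`.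
-/

lemma Finset.card_filter_isLeft_univ {α β : Type*} [Fintype α] [Fintype β] :
    #{x : α ⊕ β | x.isLeft} = Fintype.card α := by
  rw [show ({x : α ⊕ β | x.isLeft} : Finset _) = univ.map .inl by ext x; cases x <;> simp,
    card_map, card_univ]

lemma Finset.card_filter_isRight_univ {α β : Type*} [Fintype α] [Fintype β] :
    #{x : α ⊕ β | x.isRight} = Fintype.card β := by
  rw [show ({x : α ⊕ β | x.isRight} : Finset _) = univ.map .inr by ext x; cases x <;> simp,
    card_map, card_univ]

section

variable {N : ℕ}

lemma bipartiteAbove_mem_sideA (S : Finset (Fin N ⊕ Fin N)) :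
    ({x | x.isLeft} : Finset _).bipartiteAbove (fun S x => x ∈ sideA S) S = sideA S := by
  ext x
  simp [bipartiteAbove, sideA]

lemma bipartiteAbove_mem_sideB (S : Finset (Fin N ⊕ Fin N)) :
    ({x | x.isRight} : Finset _).bipartiteAbove (fun S x => x ∈ sideB S) S = sideB S := by
  ext x
  simp [bipartiteAbove, sideB]

namespace Semiintersecting

variable {k : ℕ} {F : Finset (Finset (Fin N ⊕ Fin N))}

lemma eq_of_mem_sideA_of_mem_sideB (hF : Semiintersecting k N F) {S T : Finset (Fin N ⊕ Fin N)}
    (hS : S ∈ F) (hT : T ∈ F) {x y : Fin N ⊕ Fin N} (hxS : x ∈ sideA S) (hxT : x ∈ sideA T)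
    (hyS : y ∈ sideB S) (hyT : y ∈ sideB T) : S = T := by
  by_contra hST
  have hB : sideB S ∩ sideB T ≠ ∅ := nonempty_iff_ne_empty.mp ⟨y, mem_inter.mpr ⟨hyS, hyT⟩⟩
  have hA := (hF.2 S hS T hT hST).mpr hB
  exact notMem_empty x (hA ▸ mem_inter.mpr ⟨hxS, hxT⟩)

lemma card_filter_mem_sideB_mul_le (hF : Semiintersecting k N F) (y : Fin N ⊕ Fin N) :
    #{S ∈ F | y ∈ sideB S} * k ≤ N := by
  calc #{S ∈ F | y ∈ sideB S} * k ≤ #({x | x.isLeft} : Finset (Fin N ⊕ Fin N)) * 1 := by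
        refine card_mul_le_card_mul (fun S x => x ∈ sideA S) (fun S hS => ?_) (fun x _ => ?_)
        · rw [bipartiteAbove_mem_sideA, (hF.1 S (mem_filter.mp hS).1).1]
        · refine card_le_one.mpr fun S hS T hT => ?_
          simp only [bipartiteBelow, mem_filter] at hS hT
          exact hF.eq_of_mem_sideA_of_mem_sideB hS.1.1 hT.1.1 hS.2 hT.2 hS.1.2 hT.1.2
    _ = N := by simp [card_filter_isLeft_univ]

lemma card_mul_le (hk : 0 < k) (hF : Semiintersecting k N F) : #F * k ≤ N * (N / k) := by
  calc #F * k ≤ #({x | x.isRight} : Finset (Fin N ⊕ Fin N)) * (N / k) := by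
        refine card_mul_le_card_mul (fun S x => x ∈ sideB S) (fun S hS => ?_) (fun y _ => ?_)
        · rw [bipartiteAbove_mem_sideB, (hF.1 S hS).2]
        · exact (Nat.le_div_iff_mul_le hk).mpr (hF.card_filter_mem_sideB_mul_le y)
    _ = N * (N / k) := by simp [card_filter_isRight_univ]

end Semiintersecting

end

theorem semiMax_le_double_counting_general (k N : ℕ) (hk : 0 < k) :
    semiMax k N ≤ N * (N / k) / k := by
  refine csSup_le' ?_
  rintro _ ⟨F, hF, rfl⟩
  exact (Nat.le_div_iff_mul_le hk).mpr (hF.card_mul_le hk)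

theorem semiMax_le_double_counting (k N : ℕ) (hk : 0 < k) (hkN : k ≤ N) :
    semiMax k N ≤ N * (N / k) / k :=
  semiMax_le_double_counting_general k N hk
end

section
/- If ⌊N/2⌋ ≥ R(7,7) (the Ramsey number), then f(2,N) ≤ ⌊N/2⌋ + 4. -/
open Finset

/-- `n` satisfies the Ramsey property for `(a,b)`: every graph on `n` vertices contains a
clique of size `a` or an independent set of size `b`. -/
def RamseyProp (a b n : ℕ) : Prop :=
  ∀ G : SimpleGraph (Fin n),
    (∃ s : Finset (Fin n), G.IsNClique a s) ∨
    (∃ s : Finset (Fin n), s.card = b ∧ ∀ x ∈ s, ∀ y ∈ s, x ≠ y → ¬ G.Adj x y)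

/-- The Ramsey number `R(a,b)`. -/
noncomputable def ramseyNumber (a b : ℕ) : ℕ := sInf {n | RamseyProp a b n}

/-!
Let `F` be semiintersecting and colour a pair of members by the side on which they meet. If
`#F > N/2 + 4 ≥ R(7,7)`, Ramsey's theorem yields seven members meeting pairwise on one side, say
`A` (the other case is symmetric), and hence pairwise disjoint on `B`. Members sharing a point on
one side are pairwise disjoint on the other, so such a star has at most `N/2` members.

If three of the seven have the same `A`-side `Q = {q₁, q₂}`, every member meets `Q`, so `F` is
the union of the two stars at `q₁` and `q₂`. When both differences of these stars have at least
five members, comparing the second points of their `A`-sides forces every cross pair to meet on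
`A`; then `F` is pairwise disjoint on `B`. Otherwise `#F ≤ N/2 + 4`.

Otherwise the seven have at least four distinct `A`-sides, which are pairwise intersecting
`2`-sets and therefore share a point `a`. Counting how the remaining sets can meet the seven shows
that `a` lies in the `A`-side of every member, so `F` is a star and `#F ≤ N/2`.
-/

variable {σ α β : Type*}

theorem exists_eq_pair_of_card_eq_two [DecidableEq α] {s : Finset α} {a : α} (hs : #s = 2)
    (ha : a ∈ s) : ∃ b, b ≠ a ∧ s = {a, b} := by
  obtain ⟨b, hb⟩ := card_eq_one.mp (show #(s.erase a) = 1 by rw [card_erase_of_mem ha, hs])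
  refine ⟨b, ne_of_mem_erase (hb ▸ mem_singleton_self b), ?_⟩
  rw [← insert_erase ha, hb]

theorem card_le_card_div_two_of_pairwiseDisjoint [Fintype α] [DecidableEq α] {F : Finset σ}
    {u : σ → Finset α} (hu : ∀ S ∈ F, #(u S) = 2) (hF : (F : Set σ).PairwiseDisjoint u) :
    #F ≤ Fintype.card α / 2 := by
  have : 2 * #F ≤ Fintype.card α :=
    calc 2 * #F = ∑ S ∈ F, #(u S) := by rw [sum_congr rfl hu, sum_const, smul_eq_mul, mul_comm]
      _ = #(F.biUnion u) := (card_biUnion hF).symm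
      _ ≤ Fintype.card α := card_le_univ _
  omega

theorem card_filter_not_disjoint_le [DecidableEq α] {G : Finset σ} {u : σ → Finset α}
    (hG : (G : Set σ).PairwiseDisjoint u) (X : Finset α) :
    #{T ∈ G | ¬Disjoint X (u T)} ≤ #X := by
  refine card_le_card_of_forall_subsingleton (fun T x => x ∈ u T) (fun T hT => ?_) ?_
  · obtain ⟨x, hxX, hxT⟩ := not_disjoint_iff.mp (mem_filter.mp hT).2
    exact ⟨x, hxX, hxT⟩
  · rintro x - T₁ ⟨hT₁, hx₁⟩ T₂ ⟨hT₂, hx₂⟩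
    exact hG.elim (mem_filter.mp hT₁).1 (mem_filter.mp hT₂).1 (not_disjoint_iff.mpr ⟨x, hx₁, hx₂⟩)

theorem Set.Intersecting.exists_forall_mem_of_card_eq_two [DecidableEq α]
    {V : Finset (Finset α)} (hV : (V : Set (Finset α)).Intersecting) (hc : ∀ P ∈ V, #P = 2)
    (h4 : 4 ≤ #V) : ∃ a, ∀ P ∈ V, a ∈ P := by
  by_contra! hno
  obtain ⟨P, hP⟩ := card_pos.mp (show 0 < #V by omega)
  obtain ⟨a, b, hab, rfl⟩ := card_eq_two.mp (hc P hP)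
  obtain ⟨Q, hQ, haQ⟩ := hno a
  obtain ⟨R, hR, hbR⟩ := hno b
  -- `Q = {b, c}` and `R = {a, c}`, so every member meets `{a, b}`, `{b, c}`, `{a, c}` and hence
  -- lies inside `{a, b, c} = insert a Q`
  have hVU : V ⊆ (insert a Q).powersetCard 2 := by
    refine fun X hX => mem_powersetCard.mpr ⟨?_, hc X hX⟩
    have := hV hX hP; have := hV hX hQ; have := hV hX hR
    have := hV hQ hP; have := hV hR hP; have := hV hQ hR
    obtain ⟨p, q, -, rfl⟩ := card_eq_two.mp (hc X hX)
    obtain ⟨x, y, -, rfl⟩ := card_eq_two.mp (hc Q hQ)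
    obtain ⟨z, w, -, rfl⟩ := card_eq_two.mp (hc R hR)
    simp only [Finset.disjoint_insert_left, Finset.disjoint_insert_right,
      Finset.disjoint_singleton, Finset.insert_subset_iff, Finset.mem_insert,
      Finset.mem_singleton, Finset.singleton_subset_iff] at *
    grind
  have h3 : (#(insert a Q)).choose 2 ≤ 3 := by
    simpa [hc Q hQ] using Nat.choose_le_choose 2 (card_insert_le a Q)
  have := Finset.card_le_card hVU
  rw [card_powersetCard] at this
  omega

theorem forall_eq_of_card_filter_ne_le_two [DecidableEq β] {K₁ K₂ : Finset σ} {ℓ : σ → β}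
    (h₁ : ∀ S ∈ K₁, #{T ∈ K₂ | ℓ S ≠ ℓ T} ≤ 2) (h₂ : ∀ T ∈ K₂, #{S ∈ K₁ | ℓ S ≠ ℓ T} ≤ 2)
    (hK₁ : 3 ≤ #K₁) (hK₂ : 5 ≤ #K₂) : ∀ S ∈ K₁, ∀ T ∈ K₂, ℓ S = ℓ T := by
  classical
  by_contra! ⟨S, hS, T, hT, hST⟩
  obtain ⟨S', hS', hS'T⟩ : ∃ S' ∈ K₁, ℓ S' = ℓ T := by
    by_contra! h
    have := h₂ T hT
    rw [filter_true_of_mem h] at this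
    omega
  -- every `T' ∈ K₂` differs from `S` or from `S'`, since `ℓ S ≠ ℓ T = ℓ S'`
  have hcover : K₂ ⊆ {T' ∈ K₂ | ℓ S ≠ ℓ T'} ∪ {T' ∈ K₂ | ℓ S' ≠ ℓ T'} := by
    intro T' hT'
    by_cases h : ℓ S = ℓ T'
    · exact mem_union_right _ (mem_filter.mpr ⟨hT', by rw [hS'T, ← h]; exact hST.symm⟩)
    · exact mem_union_left _ (mem_filter.mpr ⟨hT', h⟩)
  have := (card_le_card hcover).trans (card_union_le _ _)
  have := h₁ S hS
  have := h₁ S' hS'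
  omega

theorem disjoint_iff_sdiff_ne [DecidableEq α] {X Y : Finset α} {a b : α} (hX : #X = 2)
    (hY : #Y = 2) (haX : a ∈ X) (hbX : b ∉ X) (haY : a ∉ Y) (hbY : b ∈ Y) :
    Disjoint X Y ↔ X \ {a, b} ≠ Y \ {a, b} := by
  obtain ⟨c, hca, rfl⟩ := exists_eq_pair_of_card_eq_two hX haX
  obtain ⟨d, hdb, rfl⟩ := exists_eq_pair_of_card_eq_two hY hbY
  have hc : ({a, c} : Finset α) \ {a, b} = {c} := by ext; simp; grind
  have hd : ({b, d} : Finset α) \ {a, b} = {d} := by ext; simp; grind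
  rw [hc, hd, Ne, singleton_inj]
  simp only [disjoint_insert_left, disjoint_insert_right, disjoint_singleton, mem_insert,
    mem_singleton] at *
  grind

open SimpleGraph

theorem ramseyProp_iff {a b n : ℕ} : RamseyProp a b n ↔
    ∀ G : SimpleGraph (Fin n), (∃ s, G.IsNClique a s) ∨ ∃ s, Gᶜ.IsNClique b s := by
  simp only [RamseyProp, isNClique_compl, isNIndepSet_iff, isIndepSet_iff, Set.Pairwise,
    mem_coe, and_comm]

theorem RamseyProp.exists_subset {V : Type*} {a b n : ℕ} (h : RamseyProp a b n)
    (G : SimpleGraph V) (s : Finset V) (hs : n ≤ #s) :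
    (∃ t ⊆ s, G.IsNClique a t) ∨ ∃ t ⊆ s, Gᶜ.IsNClique b t := by
  let f : Fin n ↪ V :=
    (Fin.castLEEmb hs).trans (s.equivFin.symm.toEmbedding.trans (Function.Embedding.subtype _))
  have hf : ∀ t : Finset (Fin n), t.map f ⊆ s := by
    intro t x hx
    obtain ⟨i, -, rfl⟩ := mem_map.mp hx
    exact (s.equivFin.symm _).2
  rcases ramseyProp_iff.mp h (G.comap f) with ⟨t, ht⟩ | ⟨t, ht⟩
  · exact .inl ⟨t.map f, hf t, ht.map.mono (map_comap_le f G)⟩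
  · refine .inr ⟨t.map f, hf t, ht.map.mono ?_⟩
    rintro _ _ ⟨-, x, y, hxy, rfl, rfl⟩
    exact ⟨f.injective.ne hxy.1, hxy.2⟩

theorem exists_ramseyProp (a b : ℕ) : ∃ n, RamseyProp a b n := by
  induction a generalizing b with
  | zero => exact ⟨0, ramseyProp_iff.mpr fun _ => .inl ⟨∅, by simp⟩⟩
  | succ a iha =>
    induction b with
    | zero => exact ⟨0, ramseyProp_iff.mpr fun _ => .inr ⟨∅, by simp⟩⟩
    | succ b ihb =>
      obtain ⟨n₁, hn₁⟩ := iha (b + 1)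
      obtain ⟨n₂, hn₂⟩ := ihb
      refine ⟨n₁ + n₂ + 1, ramseyProp_iff.mpr fun G => ?_⟩
      classical
      let v : Fin (n₁ + n₂ + 1) := 0
      have hdeg : G.degree v + Gᶜ.degree v = n₁ + n₂ := by
        have := G.degree_compl (v := v)
        have := G.degree_lt_card_verts v
        simp only [Fintype.card_fin] at *
        omega
      obtain hn | hn : n₁ ≤ G.degree v ∨ n₂ ≤ Gᶜ.degree v := by omega
      · rcases hn₁.exists_subset G _ hn with ⟨t, ht, hc⟩ | ⟨t, -, hc⟩
        · exact .inl ⟨insert v t, hc.insert fun w hw => (mem_neighborFinset ..).mp (ht hw)⟩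
        · exact .inr ⟨t, hc⟩
      · rcases hn₂.exists_subset G _ hn with ⟨t, -, hc⟩ | ⟨t, ht, hc⟩
        · exact .inl ⟨t, hc⟩
        · exact .inr ⟨insert v t, hc.insert fun w hw => (mem_neighborFinset ..).mp (ht hw)⟩

theorem ramseyProp_ramseyNumber (a b : ℕ) : RamseyProp a b (ramseyNumber a b) :=
  Nat.sInf_mem (exists_ramseyProp a b)

/-- `u S` and `v S` stand for `S ∩ A` and `S ∩ B`. -/
structure IsSemiintersecting (F : Finset σ) (u v : σ → Finset α) : Prop where
  card_fst : ∀ S ∈ F, #(u S) = 2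
  card_snd : ∀ S ∈ F, #(v S) = 2
  disjoint_iff : ∀ S ∈ F, ∀ T ∈ F, S ≠ T → (Disjoint (u S) (u T) ↔ ¬Disjoint (v S) (v T))

namespace IsSemiintersecting

variable {F : Finset σ} {u v : σ → Finset α}

theorem swap (hF : IsSemiintersecting F u v) : IsSemiintersecting F v u :=
  ⟨hF.card_snd, hF.card_fst, fun S hS T hT hST => iff_not_comm.mp (hF.disjoint_iff S hS T hT hST)⟩

theorem pairwiseDisjoint_fst_of_mem_snd (hF : IsSemiintersecting F u v) {G : Finset σ}
    (hG : G ⊆ F) {q : α} (hq : ∀ S ∈ G, q ∈ v S) : (G : Set σ).PairwiseDisjoint u :=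
  fun S hS T hT hST =>
    (hF.disjoint_iff S (hG hS) T (hG hT) hST).mpr (not_disjoint_iff.mpr ⟨q, hq S hS, hq T hT⟩)

variable [DecidableEq α]

theorem card_filter_mem_snd_le [Fintype α] (hF : IsSemiintersecting F u v) (q : α) :
    #{S ∈ F | q ∈ v S} ≤ Fintype.card α / 2 :=
  card_le_card_div_two_of_pairwiseDisjoint (fun S hS => hF.card_fst S (mem_filter.mp hS).1)
    (hF.pairwiseDisjoint_fst_of_mem_snd (filter_subset _ _) fun _ hS => (mem_filter.mp hS).2)

theorem not_disjoint_snd_of_three_le_card_filter_snd_eq (hF : IsSemiintersecting F u v)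
    {Q : Finset α} (hQ : 3 ≤ #{S ∈ F | v S = Q}) : ∀ S ∈ F, ¬Disjoint (v S) Q := by
  set H := {S ∈ F | v S = Q}
  obtain ⟨S₀, hS₀⟩ := card_pos.mp (show 0 < #H by omega)
  obtain ⟨q, hq⟩ := card_pos.mp (show 0 < #Q by
    rw [← (mem_filter.mp hS₀).2, hF.card_snd S₀ (mem_filter.mp hS₀).1]; omega)
  have hH : (H : Set σ).PairwiseDisjoint u :=
    hF.pairwiseDisjoint_fst_of_mem_snd (filter_subset _ _) fun S hS => (mem_filter.mp hS).2 ▸ hq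
  intro S hS hSQ
  -- `u S` would have to meet the pairwise disjoint `u T`, `T ∈ H`, of which there are three
  have hHS : H ⊆ {T ∈ H | ¬Disjoint (u S) (u T)} := by
    intro T hT
    obtain ⟨hTF, rfl⟩ := mem_filter.mp hT
    have hST : S ≠ T := by
      rintro rfl
      exact not_disjoint_iff.mpr ⟨q, hq, hq⟩ hSQ
    exact mem_filter.mpr ⟨hT, fun h => (hF.disjoint_iff S hS T hTF hST).mp h hSQ⟩
  have := (card_le_card hHS).trans ((card_filter_not_disjoint_le hH (u S)).trans_eq
    (hF.card_fst S hS))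
  omega

theorem not_disjoint_snd_of_card_filter_mem_snd (hF : IsSemiintersecting F u v) {q₁ q₂ : α}
    (h₁ : 3 ≤ #{S ∈ F | q₁ ∈ v S ∧ q₂ ∉ v S}) (h₂ : 5 ≤ #{S ∈ F | q₂ ∈ v S ∧ q₁ ∉ v S}) :
    ∀ S ∈ F, q₁ ∈ v S → q₂ ∉ v S → ∀ T ∈ F, q₂ ∈ v T → q₁ ∉ v T → ¬Disjoint (v S) (v T) := by
  set K₁ := {S ∈ F | q₁ ∈ v S ∧ q₂ ∉ v S}
  set K₂ := {S ∈ F | q₂ ∈ v S ∧ q₁ ∉ v S}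
  -- for `S ∈ K₁` and `T ∈ K₂` write `v S = {q₁, s}` and `v T = {q₂, t}`: they meet iff `s = t`
  have hiff : ∀ S ∈ K₁, ∀ T ∈ K₂,
      (Disjoint (v S) (v T) ↔ v S \ {q₁, q₂} ≠ v T \ {q₁, q₂}) := by
    intro S hS T hT
    obtain ⟨hSF, hq₁S, hq₂S⟩ := mem_filter.mp hS
    obtain ⟨hTF, hq₂T, hq₁T⟩ := mem_filter.mp hT
    exact disjoint_iff_sdiff_ne (hF.card_snd S hSF) (hF.card_snd T hTF) hq₁S hq₂S hq₁T hq₂T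
  have hmeet : ∀ S ∈ K₁, ∀ T ∈ K₂, v S \ {q₁, q₂} ≠ v T \ {q₁, q₂} → ¬Disjoint (u S) (u T) := by
    intro S hS T hT hne
    have hST : S ≠ T := by
      rintro rfl
      exact (mem_filter.mp hS).2.2 (mem_filter.mp hT).2.1
    exact fun h => (hF.disjoint_iff S (mem_filter.mp hS).1 T (mem_filter.mp hT).1 hST).mp h
      ((hiff S hS T hT).mpr hne)
  have hd₁ : (K₁ : Set σ).PairwiseDisjoint u :=
    hF.pairwiseDisjoint_fst_of_mem_snd (filter_subset _ _) fun S hS => (mem_filter.mp hS).2.1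
  have hd₂ : (K₂ : Set σ).PairwiseDisjoint u :=
    hF.pairwiseDisjoint_fst_of_mem_snd (filter_subset _ _) fun S hS => (mem_filter.mp hS).2.1
  have key := forall_eq_of_card_filter_ne_le_two (ℓ := fun S => v S \ {q₁, q₂}) (K₁ := K₁)
    (K₂ := K₂) (fun S hS => ?_) (fun T hT => ?_) h₁ h₂
  · intro S hSF hq₁S hq₂S T hTF hq₂T hq₁T
    have hS : S ∈ K₁ := mem_filter.mpr ⟨hSF, hq₁S, hq₂S⟩
    have hT : T ∈ K₂ := mem_filter.mpr ⟨hTF, hq₂T, hq₁T⟩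
    rw [hiff S hS T hT, not_not]
    exact key S hS T hT
  · calc #{T ∈ K₂ | v S \ {q₁, q₂} ≠ v T \ {q₁, q₂}}
        ≤ #{T ∈ K₂ | ¬Disjoint (u S) (u T)} :=
          card_le_card fun T hT => mem_filter.mpr
            ⟨(mem_filter.mp hT).1, hmeet S hS T (mem_filter.mp hT).1 (mem_filter.mp hT).2⟩
      _ ≤ 2 := (card_filter_not_disjoint_le hd₂ (u S)).trans_eq (hF.card_fst S (mem_filter.mp hS).1)
  · calc #{S ∈ K₁ | v S \ {q₁, q₂} ≠ v T \ {q₁, q₂}}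
        ≤ #{S ∈ K₁ | ¬Disjoint (u T) (u S)} :=
          card_le_card fun S hS => mem_filter.mpr ⟨(mem_filter.mp hS).1,
            disjoint_comm.not.mp (hmeet S (mem_filter.mp hS).1 T hT (mem_filter.mp hS).2)⟩
      _ ≤ 2 := (card_filter_not_disjoint_le hd₁ (u T)).trans_eq (hF.card_fst T (mem_filter.mp hT).1)

theorem card_le_of_three_le_card_filter_snd_eq [Fintype α] (hF : IsSemiintersecting F u v)
    (Q : Finset α) (hQ : 3 ≤ #{S ∈ F | v S = Q}) : #F ≤ Fintype.card α / 2 + 4 := by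
  obtain ⟨S₀, hS₀⟩ := card_pos.mp (show 0 < #{S ∈ F | v S = Q} by omega)
  obtain ⟨hS₀F, rfl⟩ := mem_filter.mp hS₀
  obtain ⟨q₁, q₂, -, hQ₂⟩ := card_eq_two.mp (hF.card_snd S₀ hS₀F)
  have hmem : ∀ S ∈ F, q₁ ∈ v S ∨ q₂ ∈ v S := by
    intro S hS
    obtain ⟨q, hqS, hq⟩ :=
      not_disjoint_iff.mp (hF.not_disjoint_snd_of_three_le_card_filter_snd_eq hQ S hS)
    rw [hQ₂, mem_insert, mem_singleton] at hq
    rcases hq with rfl | rfl <;> simp [hqS]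
  have hsplit : ∀ {q q' : α}, (∀ S ∈ F, q ∈ v S ∨ q' ∈ v S) →
      #F = #{S ∈ F | q' ∈ v S} + #{S ∈ F | q ∈ v S ∧ q' ∉ v S} := by
    intro q q' h
    rw [← card_filter_add_card_filter_not (s := F) (fun S => q' ∈ v S)]
    congr 2
    exact filter_congr fun S hS => by have := h S hS; tauto
  have h₁ := hsplit hmem
  have h₂ := hsplit fun S hS => (hmem S hS).symm
  have hL₁ := hF.card_filter_mem_snd_le q₁
  have hL₂ := hF.card_filter_mem_snd_le q₂
  by_cases hsmall : #{S ∈ F | q₁ ∈ v S ∧ q₂ ∉ v S} ≤ 4 ∨ #{S ∈ F | q₂ ∈ v S ∧ q₁ ∉ v S} ≤ 4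
  · omega
  push Not at hsmall
  have hcross := hF.not_disjoint_snd_of_card_filter_mem_snd (by omega) hsmall.2
  have hF₂ : (F : Set σ).PairwiseDisjoint u := by
    intro S hS T hT hST
    refine (hF.disjoint_iff S hS T hT hST).mpr fun hd => ?_
    by_cases hS₁ : q₁ ∈ v S
    · have hT₁ : q₁ ∉ v T := disjoint_left.mp hd hS₁
      have hT₂ : q₂ ∈ v T := (hmem T hT).resolve_left hT₁
      exact hcross S hS hS₁ (disjoint_right.mp hd hT₂) T hT hT₂ hT₁ hd
    · have hS₂ : q₂ ∈ v S := (hmem S hS).resolve_left hS₁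
      have hT₂ : q₂ ∉ v T := disjoint_left.mp hd hS₂
      exact hcross T hT ((hmem T hT).resolve_right hT₂) hT₂ S hS hS₂ hS₁ hd.symm
  have := card_le_card_div_two_of_pairwiseDisjoint hF.card_fst hF₂
  omega

theorem forall_mem_fst_of_card_eq_seven (hF : IsSemiintersecting F u v) {T : Finset σ}
    (hTF : T ⊆ F) (hT₇ : #T = 7) (hT : (T : Set σ).Pairwise fun S S' => ¬Disjoint (u S) (u S'))
    (hfib : ∀ P, #{S ∈ T | u S = P} ≤ 2) {a : α} (ha : ∀ S ∈ T, a ∈ u S) :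
    ∀ S ∈ F, a ∈ u S := by
  intro S hS
  by_contra haS
  have hTv : (T : Set σ).PairwiseDisjoint v := fun T₁ h₁ T₂ h₂ hne => not_not.mp fun h =>
    hT h₁ h₂ hne ((hF.disjoint_iff T₁ (hTF h₁) T₂ (hTF h₂) hne).mpr h)
  have hmeet : #{T' ∈ T | ¬Disjoint (v S) (v T')} ≤ 2 :=
    (card_filter_not_disjoint_le hTv (v S)).trans_eq (hF.card_snd S hS)
  have hmaps : ∀ T' ∈ {T' ∈ T | Disjoint (v S) (v T')},
      u T' ∈ (u S).image fun w => ({a, w} : Finset α) := by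
    intro T' hT'
    obtain ⟨hT'T, hd⟩ := mem_filter.mp hT'
    have hST : S ≠ T' := by
      rintro rfl
      exact haS (ha S hT'T)
    obtain ⟨w, hwS, hwT⟩ :=
      not_disjoint_iff.mp fun h => (hF.disjoint_iff S hS T' (hTF hT'T) hST).mp h hd
    obtain ⟨b, -, hb⟩ := exists_eq_pair_of_card_eq_two (hF.card_fst T' (hTF hT'T)) (ha T' hT'T)
    rw [hb, mem_insert, mem_singleton] at hwT
    rcases hwT with rfl | rfl
    · exact absurd hwS haS
    · exact mem_image.mpr ⟨w, hwS, hb.symm⟩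
  have hdisj : #{T' ∈ T | Disjoint (v S) (v T')} ≤ 4 :=
    calc #{T' ∈ T | Disjoint (v S) (v T')} ≤ 2 * #((u S).image fun w => ({a, w} : Finset α)) :=
          card_le_mul_card_image_of_maps_to hmaps 2 fun P _ =>
            (card_le_card (filter_subset_filter _ (filter_subset _ _))).trans (hfib P)
      _ ≤ 2 * #(u S) := Nat.mul_le_mul_left 2 card_image_le
      _ = 4 := by rw [hF.card_fst S hS]
  have := card_filter_add_card_filter_not (s := T) fun T' => Disjoint (v S) (v T')
  omega

theorem card_le_of_pairwise_not_disjoint_fst [Fintype α] (hF : IsSemiintersecting F u v)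
    {T : Finset σ} (hTF : T ⊆ F) (hT₇ : #T = 7)
    (hT : (T : Set σ).Pairwise fun S S' => ¬Disjoint (u S) (u S')) :
    #F ≤ Fintype.card α / 2 + 4 := by
  by_cases hfib : ∃ P, 3 ≤ #{S ∈ T | u S = P}
  · obtain ⟨P, hP⟩ := hfib
    exact hF.swap.card_le_of_three_le_card_filter_snd_eq P
      (hP.trans (card_le_card (filter_subset_filter _ hTF)))
  push Not at hfib
  have hfib₂ : ∀ P, #{S ∈ T | u S = P} ≤ 2 := fun P => Nat.lt_succ_iff.mp (hfib P)
  have h₄ : 4 ≤ #(T.image u) := by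
    have := card_le_mul_card_image T 2 fun P _ => hfib₂ P
    omega
  have hint : ((T.image u : Finset (Finset α)) : Set (Finset α)).Intersecting := by
    simp only [coe_image]
    rintro _ ⟨S, hS, rfl⟩ _ ⟨S', hS', rfl⟩
    obtain rfl | hSS' := eq_or_ne S S'
    · rw [disjoint_self_iff_empty, ← card_eq_zero, hF.card_fst S (hTF hS)]
      omega
    · exact hT hS hS' hSS'
  obtain ⟨a, ha⟩ := hint.exists_forall_mem_of_card_eq_two
    (fun P hP => by obtain ⟨S, hS, rfl⟩ := mem_image.mp hP; exact hF.card_fst S (hTF hS)) h₄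
  have haF := hF.forall_mem_fst_of_card_eq_seven hTF hT₇ hT hfib₂
    fun S hS => ha _ (mem_image_of_mem u hS)
  have := hF.swap.card_filter_mem_snd_le a
  rw [filter_true_of_mem haF] at this
  omega

theorem card_le_of_ramseyProp [Fintype α] (hF : IsSemiintersecting F u v) {r : ℕ}
    (hr : RamseyProp 7 7 r) (hrα : r ≤ Fintype.card α / 2) : #F ≤ Fintype.card α / 2 + 4 := by
  by_contra! hlt
  let G : SimpleGraph σ :=
    { Adj S T := S ≠ T ∧ ¬Disjoint (u S) (u T)
      symm := ⟨fun _ _ h => ⟨h.1.symm, disjoint_comm.not.mp h.2⟩⟩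
      loopless := ⟨fun _ h => h.1 rfl⟩ }
  rcases hr.exists_subset G F (by omega) with ⟨T, hTF, hT⟩ | ⟨T, hTF, hT⟩
  · exact hlt.not_ge <| hF.card_le_of_pairwise_not_disjoint_fst hTF hT.card_eq
      fun S hS S' hS' h => (hT.isClique hS hS' h).2
  · refine hlt.not_ge <| hF.swap.card_le_of_pairwise_not_disjoint_fst hTF hT.card_eq
      fun S hS S' hS' h => (hF.disjoint_iff S (hTF hS) S' (hTF hS') h).mp ?_
    exact not_not.mp fun hd => (hT.isClique hS hS' h).2 ⟨h, hd⟩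

end IsSemiintersecting

theorem sideA_eq_map_toLeft {N : ℕ} (S : Finset (Fin N ⊕ Fin N)) :
    sideA S = S.toLeft.map .inl := by
  ext (x | x) <;> simp [sideA]

theorem sideB_eq_map_toRight {N : ℕ} (S : Finset (Fin N ⊕ Fin N)) :
    sideB S = S.toRight.map .inr := by
  ext (x | x) <;> simp [sideB]

theorem Semiintersecting.isSemiintersecting {N : ℕ} {F : Finset (Finset (Fin N ⊕ Fin N))}
    (hF : Semiintersecting 2 N F) : IsSemiintersecting F toLeft toRight where
  card_fst S hS := by simpa [sideA_eq_map_toLeft] using (hF.1 S hS).1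
  card_snd S hS := by simpa [sideB_eq_map_toRight] using (hF.1 S hS).2
  disjoint_iff S hS T hT hST := by
    simpa [← disjoint_iff_inter_eq_empty, sideA_eq_map_toLeft, sideB_eq_map_toRight] using
      hF.2 S hS T hT hST

theorem semiMax_two (N : ℕ) (h : ramseyNumber 7 7 ≤ N / 2) :
    semiMax 2 N ≤ N / 2 + 4 := by
  refine csSup_le ⟨0, ∅, ⟨by simp, by simp⟩, rfl⟩ ?_
  rintro _ ⟨F, hF, rfl⟩
  simpa using hF.isSemiintersecting.card_le_of_ramseyProp (ramseyProp_ramseyNumber 7 7)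
    (by simpa using h)
end

section
/- Let S be a semiintersecting family and let C ⊂ A with 1 ≤ |C| ≤ k−1. If S₁,…,S_{2k+1} ∈ S are sets such that the intersection of any two of them equals C, then every other member of S intersects C. -/
open Finset

/-!
Suppose `S` misses `C`. Each `T i` meets `S`, on one side or the other, and since
`T i ∩ T j = C` for `i ≠ j`, the sets `S ∩ T i` are pairwise disjoint. So `S`, which has only
`2 * k` elements, would contain `2 * k + 1` pairwise disjoint nonempty subsets.
-/

namespace Semiintersecting

variable {k N : ℕ} {F : Finset (Finset (Fin N ⊕ Fin N))}

lemma card_eq (hF : Semiintersecting k N F) {S : Finset (Fin N ⊕ Fin N)} (hS : S ∈ F) :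
    #S = 2 * k := by
  have hsplit : #(sideA S) + #(sideB S) = #S := by
    simpa only [sideA, sideB, Sum.not_isLeft] using
      card_filter_add_card_filter_not (s := S) (fun x => x.isLeft)
  rw [← hsplit, (hF.1 S hS).1, (hF.1 S hS).2, two_mul]

lemma inter_nonempty (hF : Semiintersecting k N F) {S T : Finset (Fin N ⊕ Fin N)}
    (hS : S ∈ F) (hT : T ∈ F) (hST : S ≠ T) : (S ∩ T).Nonempty := by
  have hsub : ∀ p : Fin N ⊕ Fin N → Bool, S.filter (p ·) ∩ T.filter (p ·) ⊆ S ∩ T :=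
    fun _ => inter_subset_inter (filter_subset _ _) (filter_subset _ _)
  by_cases hA : sideA S ∩ sideA T = ∅
  · exact (nonempty_iff_ne_empty.2 ((hF.2 S hS T hT hST).1 hA)).mono (hsub _)
  · exact (nonempty_iff_ne_empty.2 hA).mono (hsub _)

end Semiintersecting

theorem catcher_lemma_general (k N : ℕ) (F : Finset (Finset (Fin N ⊕ Fin N)))
    (hF : Semiintersecting k N F) (C : Finset (Fin N ⊕ Fin N))
    (T : Fin (2 * k + 1) → Finset (Fin N ⊕ Fin N))
    (hTF : ∀ i, T i ∈ F) (hTC : ∀ i j, i ≠ j → T i ∩ T j = C) :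
    ∀ S ∈ F, (∀ i, S ≠ T i) → (S ∩ C).Nonempty := by
  intro S hS hST
  by_contra hSC
  rw [not_nonempty_iff_eq_empty] at hSC
  have hdisj : ((univ : Finset (Fin (2 * k + 1))) : Set _).PairwiseDisjoint (S ∩ T ·) := by
    intro i _ j _ hij
    rw [Function.onFun, disjoint_iff_inter_eq_empty, ← inter_inter_distrib_left, hTC i j hij, hSC]
  have hcount := card_le_card_biUnion hdisj fun i _ => hF.inter_nonempty hS (hTF i) (hST i)
  have hsub : (univ.biUnion (S ∩ T ·)) ⊆ S := biUnion_subset.2 fun _ _ => inter_subset_left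
  have hle := hcount.trans (card_le_card hsub)
  rw [card_univ, Fintype.card_fin, hF.card_eq hS] at hle
  omega

theorem catcher_lemma (k N : ℕ) (hk : 0 < k) (F : Finset (Finset (Fin N ⊕ Fin N)))
    (hF : Semiintersecting k N F) (C : Finset (Fin N ⊕ Fin N))
    (hCA : ∀ x ∈ C, x.isLeft) (hC1 : 1 ≤ C.card) (hC2 : C.card ≤ k - 1)
    (T : Fin (2 * k + 1) → Finset (Fin N ⊕ Fin N)) (hTinj : Function.Injective T)
    (hTF : ∀ i, T i ∈ F) (hTC : ∀ i j, i ≠ j → T i ∩ T j = C) :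
    ∀ S ∈ F, (∀ i, S ≠ T i) → (S ∩ C).Nonempty :=
  catcher_lemma_general k N F hF C T hTF hTC
end

section
/- Let S be a semiintersecting family with parameters (k,N) on A∪B, and let g : A∪B → ℤ⁺ be such that there exist constants N', k' with Σ_{a∈A} g(a) = Σ_{b∈B} g(b) = N' and Σ_{s∈S∩A} g(s) = Σ_{s∈S∩B} g(s) = k' for all S ∈ S. Then f(k',N') ≥ |S|. -/
open Finset

/-!
Replace each point `u` of `A ∪ B` by `g u` copies on the same side: pick maps `Fin N' → Fin N`
on each side whose fibres have sizes `g`, and send every member of the family to its preimage.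
Preimages under a surjection commute with intersections and detect emptiness, so the new family
is again semiintersecting, and its members meet each side in `∑ g = k'` points.
-/

lemma exists_fiber_card_eq {α : Type*} [Fintype α] [DecidableEq α] {n : ℕ} (w : α → ℕ)
    (hw : ∑ a, w a = n) : ∃ p : Fin n → α, ∀ a, #{v | p v = a} = w a := by
  let e : Fin n ≃ Σ a, Fin (w a) :=
    (Fintype.equivFinOfCardEq (by simp [Fintype.card_sigma, hw])).symm
  refine ⟨fun v => (e v).1, fun a => ?_⟩
  rw [← Fintype.card_subtype, Fintype.card_congr ((e.subtypeEquiv fun _ => Iff.rfl).trans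
    (Equiv.sigmaSubtype a)), Fintype.card_fin]

section Pullback

variable {α β : Type*} [Fintype β] [DecidableEq α] (π : β → α)

/-- Unlike `Finset.preimage`, this needs no injectivity of `π`. -/
def pullbackFinset (U : Finset α) : Finset β := {x | π x ∈ U}

variable {π}

@[simp]
lemma mem_pullbackFinset {U : Finset α} {x : β} : x ∈ pullbackFinset π U ↔ π x ∈ U := by
  simp [pullbackFinset]

lemma pullbackFinset_inter [DecidableEq β] (U V : Finset α) :
    pullbackFinset π (U ∩ V) = pullbackFinset π U ∩ pullbackFinset π V := by
  ext; simp

lemma pullbackFinset_injective (hπ : Function.Surjective π) :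
    Function.Injective (pullbackFinset π) := by
  intro U V h
  ext u
  obtain ⟨x, rfl⟩ := hπ u
  rw [← mem_pullbackFinset, h, mem_pullbackFinset]

lemma pullbackFinset_eq_empty (hπ : Function.Surjective π) {U : Finset α} :
    pullbackFinset π U = ∅ ↔ U = ∅ := by
  rw [← pullbackFinset_injective hπ |>.eq_iff]
  simp [Finset.ext_iff]

lemma card_pullbackFinset (U : Finset α) :
    #(pullbackFinset π U) = ∑ u ∈ U, #{x | π x = u} := by
  rw [card_eq_sum_card_fiberwise fun x hx => mem_pullbackFinset.mp hx]
  refine sum_congr rfl fun u hu => congrArg card ?_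
  ext x
  simp only [mem_filter, mem_pullbackFinset, mem_univ, true_and]
  exact ⟨And.right, fun h => ⟨h ▸ hu, h⟩⟩

end Pullback

section SumMap

variable {N N' : ℕ} {pA pB : Fin N' → Fin N}

lemma sideA_pullbackFinset_sumMap (U : Finset (Fin N ⊕ Fin N)) :
    sideA (pullbackFinset (Sum.map pA pB) U) = pullbackFinset (Sum.map pA pB) (sideA U) := by
  ext (v | v) <;> simp [sideA]

lemma sideB_pullbackFinset_sumMap (U : Finset (Fin N ⊕ Fin N)) :
    sideB (pullbackFinset (Sum.map pA pB) U) = pullbackFinset (Sum.map pA pB) (sideB U) := by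
  ext (v | v) <;> simp [sideB]

lemma card_fiber_sumMap_eq {w : Fin N ⊕ Fin N → ℕ} (hpA : ∀ a, #{v | pA v = a} = w (.inl a))
    (hpB : ∀ b, #{v | pB v = b} = w (.inr b)) (u : Fin N ⊕ Fin N) :
    #{x | Sum.map pA pB x = u} = w u := by
  rw [card_filter, Fintype.sum_sum_type]
  rcases u with a | b <;> simp [← hpA, ← hpB]

end SumMap

theorem Semiintersecting.pullbackFinset_sumMap {k N k' N' : ℕ}
    {F : Finset (Finset (Fin N ⊕ Fin N))} (hF : Semiintersecting k N F)
    {pA pB : Fin N' → Fin N} (hπ : Function.Surjective (Sum.map pA pB))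
    (hSA : ∀ S ∈ F, #(sideA (pullbackFinset (Sum.map pA pB) S)) = k')
    (hSB : ∀ S ∈ F, #(sideB (pullbackFinset (Sum.map pA pB) S)) = k') :
    Semiintersecting k' N' (F.image (pullbackFinset (Sum.map pA pB))) := by
  refine ⟨by simpa using fun S hS => ⟨hSA S hS, hSB S hS⟩, ?_⟩
  simp only [mem_image, forall_exists_index, and_imp]
  rintro _ S hS rfl _ T hT rfl hne
  simp only [sideA_pullbackFinset_sumMap, sideB_pullbackFinset_sumMap, ← pullbackFinset_inter,
    ne_eq, pullbackFinset_eq_empty hπ]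
  exact hF.2 S hS T hT (ne_of_apply_ne _ hne)

lemma le_semiMax {k N : ℕ} {F : Finset (Finset (Fin N ⊕ Fin N))} (hF : Semiintersecting k N F) :
    #F ≤ semiMax k N :=
  le_csSup ⟨Fintype.card (Finset (Fin N ⊕ Fin N)), by
    rintro _ ⟨G, -, rfl⟩; exact G.card_le_univ⟩ ⟨F, hF, rfl⟩

theorem semiMax_weighting (k N k' N' : ℕ) (F : Finset (Finset (Fin N ⊕ Fin N)))
    (hF : Semiintersecting k N F) (g : (Fin N ⊕ Fin N) → ℕ) (hg : ∀ x, 0 < g x)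
    (hA : ∑ a : Fin N, g (Sum.inl a) = N') (hB : ∑ b : Fin N, g (Sum.inr b) = N')
    (hSA : ∀ S ∈ F, ∑ s ∈ sideA S, g s = k') (hSB : ∀ S ∈ F, ∑ s ∈ sideB S, g s = k') :
    F.card ≤ semiMax k' N' := by
  obtain ⟨pA, hpA⟩ := exists_fiber_card_eq (fun a => g (.inl a)) hA
  obtain ⟨pB, hpB⟩ := exists_fiber_card_eq (fun b => g (.inr b)) hB
  have hfib := card_fiber_sumMap_eq (w := g) hpA hpB
  have hπ : Function.Surjective (Sum.map pA pB) := fun u => by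
    obtain ⟨x, hx⟩ := card_pos.mp ((hfib u).symm ▸ hg u)
    exact ⟨x, (mem_filter.mp hx).2⟩
  have hF' := hF.pullbackFinset_sumMap hπ
    (fun S hS => by
      simp only [sideA_pullbackFinset_sumMap, card_pullbackFinset, hfib]; exact hSA S hS)
    (fun S hS => by
      simp only [sideB_pullbackFinset_sumMap, card_pullbackFinset, hfib]; exact hSB S hS)
  calc #F = #(F.image (pullbackFinset (Sum.map pA pB))) :=
        (card_image_of_injective F (pullbackFinset_injective hπ)).symm
    _ ≤ semiMax k' N' := le_semiMax hF'
end

section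
/- If d divides both k and N, then f(k,N) ≥ f(k/d, N/d). -/
open Finset

/-!
Replace every point of `A ∪ B` by `d` copies on the same side. A set meeting each side in `k`
points becomes one meeting each side in `k * d` points, and two blown-up sets meet on a side
exactly when the original sets do. So blowing up a semiintersecting family for `(k, N)` gives,
injectively, one for `(k * d, N * d)`.
-/

section blowUp

variable {m d : ℕ}

def blowUpEquiv (m d : ℕ) : (Fin m ⊕ Fin m) × Fin d ≃ Fin (m * d) ⊕ Fin (m * d) :=
  (Equiv.sumProdDistrib _ _ _).trans (Equiv.sumCongr finProdFinEquiv finProdFinEquiv)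

lemma isLeft_blowUpEquiv (p : (Fin m ⊕ Fin m) × Fin d) :
    (blowUpEquiv m d p).isLeft = p.1.isLeft := by
  obtain ⟨x | x, j⟩ := p <;> rfl

lemma isRight_blowUpEquiv (p : (Fin m ⊕ Fin m) × Fin d) :
    (blowUpEquiv m d p).isRight = p.1.isRight := by
  obtain ⟨x | x, j⟩ := p <;> rfl

def blowUp (d : ℕ) (S : Finset (Fin m ⊕ Fin m)) : Finset (Fin (m * d) ⊕ Fin (m * d)) :=
  (S ×ˢ univ).map (blowUpEquiv m d).toEmbedding

lemma sideA_blowUp (S : Finset (Fin m ⊕ Fin m)) : sideA (blowUp d S) = blowUp d (sideA S) := by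
  simp only [sideA, blowUp, filter_map]
  congr 2
  ext
  simp [isLeft_blowUpEquiv]

lemma sideB_blowUp (S : Finset (Fin m ⊕ Fin m)) : sideB (blowUp d S) = blowUp d (sideB S) := by
  simp only [sideB, blowUp, filter_map]
  congr 2
  ext
  simp [isRight_blowUpEquiv]

lemma card_blowUp (S : Finset (Fin m ⊕ Fin m)) : (blowUp d S).card = S.card * d := by
  simp [blowUp]

lemma blowUp_inter (S T : Finset (Fin m ⊕ Fin m)) :
    blowUp d (S ∩ T) = blowUp d S ∩ blowUp d T := by
  simp only [blowUp, inter_product, map_inter]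

lemma blowUp_eq_empty (hd : 0 < d) {S : Finset (Fin m ⊕ Fin m)} :
    blowUp d S = ∅ ↔ S = ∅ := by
  have : (univ : Finset (Fin d)).Nonempty := univ_nonempty_iff.mpr ⟨⟨0, hd⟩⟩
  simp [blowUp, product_eq_empty, this.ne_empty]

lemma blowUp_injective (hd : 0 < d) :
    Function.Injective (blowUp d : Finset (Fin m ⊕ Fin m) → _) := by
  have : (univ : Finset (Fin d)).Nonempty := univ_nonempty_iff.mpr ⟨⟨0, hd⟩⟩
  intro S T h
  rw [← product_image_fst (s := S) this, ← product_image_fst (s := T) this,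
    map_injective _ h]

end blowUp

lemma Semiintersecting.blowUp {k m d : ℕ} (hd : 0 < d) {F : Finset (Finset (Fin m ⊕ Fin m))}
    (hF : Semiintersecting k m F) : Semiintersecting (k * d) (m * d) (F.image (blowUp d)) := by
  refine ⟨?_, ?_⟩
  · simp only [mem_image, forall_exists_index, and_imp, forall_apply_eq_imp_iff₂]
    intro S hS
    simp [sideA_blowUp, sideB_blowUp, card_blowUp, hF.1 S hS]
  · simp only [mem_image, forall_exists_index, and_imp, forall_apply_eq_imp_iff₂]
    intro S hS T hT hST
    simp only [sideA_blowUp, sideB_blowUp, ← blowUp_inter, ne_eq, blowUp_eq_empty hd]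
    exact hF.2 S hS T hT (fun h => hST (h ▸ rfl))

lemma card_le_semiMax {k N : ℕ} {F : Finset (Finset (Fin N ⊕ Fin N))}
    (hF : Semiintersecting k N F) : F.card ≤ semiMax k N := by
  refine le_csSup ⟨Fintype.card (Finset (Fin N ⊕ Fin N)), ?_⟩ ⟨F, hF, rfl⟩
  rintro n ⟨G, -, rfl⟩
  exact card_le_univ G

lemma semiMax_le_semiMax_mul {k m d : ℕ} (hd : 0 < d) :
    semiMax k m ≤ semiMax (k * d) (m * d) := by
  refine csSup_le' ?_
  rintro n ⟨F, hF, rfl⟩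
  rw [← card_image_of_injective F (blowUp_injective hd)]
  exact card_le_semiMax (hF.blowUp hd)

theorem semiMax_div (k N d : ℕ) (hdk : d ∣ k) (hdN : d ∣ N) :
    semiMax (k / d) (N / d) ≤ semiMax k N := by
  rcases Nat.eq_zero_or_pos d with rfl | hd
  · simp [zero_dvd_iff.mp hdk, zero_dvd_iff.mp hdN]
  obtain ⟨k, rfl⟩ := hdk
  obtain ⟨m, rfl⟩ := hdN
  rw [Nat.mul_div_cancel_left _ hd, Nat.mul_div_cancel_left _ hd, mul_comm d k, mul_comm d m]
  exact semiMax_le_semiMax_mul hd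
end

section
/- If p is a prime power, then f(p, p²) ≥ p². -/
/-!
Index the members by the lines `y = m x + c` of the affine plane `K²` over a field with `p`
elements. The `A`-trace of the member for `(m, c)` is that line and its `B`-trace is the
vertical line `x = m`: two distinct lines are disjoint exactly when they are parallel, i.e. have
the same slope, which is exactly when their `B`-traces meet.
-/

open Finset

lemma map_inter_map_eq_empty_iff {α β : Type*} [DecidableEq α] [DecidableEq β] (f : α ↪ β)
    (s s' : Finset α) : s.map f ∩ s'.map f = ∅ ↔ Disjoint s s' := by
  rw [← map_inter, map_eq_empty, disjoint_iff_inter_eq_empty]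

section DisjSum

variable {N : ℕ} (s t : Finset (Fin N))

lemma sideA_disjSum : sideA (s.disjSum t) = s.map .inl := by
  ext (x | x) <;> simp [sideA]

lemma sideB_disjSum : sideB (s.disjSum t) = t.map .inr := by
  ext (x | x) <;> simp [sideB]

/-- Injectivity of the indexing is automatic: equal traces would have to be disjoint on exactly
one side. -/
theorem card_le_semiMax_of_traces {k : ℕ} {ι : Type*} [Fintype ι] (L R : ι → Finset (Fin N))
    (hL : ∀ i, #(L i) = k) (hR : ∀ i, #(R i) = k)
    (hLR : ∀ i j, i ≠ j → (Disjoint (L i) (L j) ↔ ¬Disjoint (R i) (R j))) :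
    Fintype.card ι ≤ semiMax k N := by
  classical
  have hinj : Function.Injective fun i => (L i).disjSum (R i) := by
    intro i j hij
    obtain ⟨hLij, hRij⟩ := disjSum_inj.1 hij
    by_contra hne
    have := hLR i j hne
    rw [hLij, hRij, disjoint_self_iff_empty, disjoint_self_iff_empty, ← card_eq_zero,
      ← card_eq_zero, hL, hR] at this
    exact iff_not_self this
  let F := univ.map ⟨_, hinj⟩
  have hF : Semiintersecting k N F := by
    refine ⟨?_, ?_⟩
    · simp only [F, mem_map, mem_univ, true_and, Function.Embedding.coeFn_mk]
      rintro _ ⟨i, rfl⟩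
      simp [sideA_disjSum, sideB_disjSum, hL, hR]
    · simp only [F, mem_map, mem_univ, true_and, Function.Embedding.coeFn_mk]
      rintro _ ⟨i, rfl⟩ _ ⟨j, rfl⟩ hij
      rw [sideA_disjSum, sideA_disjSum, sideB_disjSum, sideB_disjSum,
        map_inter_map_eq_empty_iff, Ne, map_inter_map_eq_empty_iff]
      exact hLR i j (by rintro rfl; exact hij rfl)
  simpa [F] using le_semiMax hF

end DisjSum

lemma disjoint_singleton_product_univ_iff {K : Type*} [Fintype K] [Nonempty K] (m m' : K) :
    Disjoint ({m} ×ˢ (univ : Finset K)) ({m'} ×ˢ univ) ↔ m ≠ m' := by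
  rw [disjoint_product, disjoint_singleton, disjoint_self_iff_empty, univ_eq_empty_iff,
    or_iff_left (not_isEmpty_of_nonempty K)]

section AffinePlane

variable {K : Type*} [Field K] [Fintype K] [DecidableEq K]

def affineLine (m c : K) : Finset (K × K) := univ.image fun x => (x, m * x + c)

lemma card_affineLine (m c : K) : #(affineLine m c) = Fintype.card K :=
  card_image_of_injective _ fun _ _ h => congrArg Prod.fst h

lemma disjoint_affineLine_iff {m c m' c' : K} (h : (m, c) ≠ (m', c')) :
    Disjoint (affineLine m c) (affineLine m' c') ↔ m = m' := by
  simp only [affineLine, disjoint_left, mem_image, mem_univ, true_and, forall_exists_index,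
    forall_apply_eq_imp_iff, Prod.mk.injEq, not_exists, not_and]
  constructor
  · intro hd
    by_contra hm
    have hm' : m - m' ≠ 0 := sub_ne_zero.2 hm
    refine hd ((c' - c) / (m - m')) _ rfl ?_
    field_simp
    ring
  · rintro rfl x y rfl hy
    exact h (by rw [add_left_cancel hy])

end AffinePlane

theorem card_sq_le_semiMax (K : Type*) [Field K] [Fintype K] :
    Fintype.card K ^ 2 ≤ semiMax (Fintype.card K) (Fintype.card K ^ 2) := by
  classical
  let e : K × K ↪ Fin (Fintype.card K ^ 2) :=
    (Fintype.equivFinOfCardEq (by simp [sq])).toEmbedding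
  have := card_le_semiMax_of_traces (k := Fintype.card K)
    (fun mc : K × K => (affineLine mc.1 mc.2).map e) (fun mc => ({mc.1} ×ˢ univ).map e)
    (fun _ => by rw [card_map, card_affineLine]) (fun _ => by simp)
    (fun _ _ h => by
      rw [disjoint_map, disjoint_map, disjoint_affineLine_iff h,
        disjoint_singleton_product_univ_iff, not_not])
  simpa [sq] using this

theorem semiMax_primePow_sq (p : ℕ) (hp : IsPrimePow p) :
    p ^ 2 ≤ semiMax p (p ^ 2) := by
  obtain ⟨_⟩ : Nonempty (Field (Fin p)) := Fintype.nonempty_field_iff.2 (by simpa using hp)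
  simpa using card_sq_le_semiMax (Fin p)
end
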